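/- arXiv:2401.00485 — 2 statements merged into one kernel-verified Lean document; each statement's English description precedes it below -/
import Mathlib

section
/- Let A and B be complex unital Banach algebras with A semisimple, and let T : A → B be a surjective map which is spectrally additive, i.e. σ(x + y) = σ(Tx + Ty) for all x, y ∈ A. Then: (a) σ(Tx) = σ(x) for each x ∈ A, and T maps the group of invertible elements of A onto the group of invertible elements of B; (b) T is injective; (c) T(λ·1 + x) = λ·1 + Tx for every λ ∈ ℂ and x ∈ A, and in particular T(0) = 0 and T(1) = 1. -/
/-!
If `a + v` is invertible for every invertible `v` in a complex Banach algebra, then `a` lies in the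
Jacobson radical (Zemánek). So in a semisimple algebra `p = q` as soon as `σ(p + z) = σ(q + z)`
for all `z`. For spectrally additive `T` this turns `σ(v + z) = σ(T w + T z)` for all `z` into
`w = v`; taking for `w` a preimage of `T v`, of `0`, or of `λ • 1 + T x` gives injectivity,
`T 0 = 0` and `T (λ • 1 + x) = λ • 1 + T x`.

Zemánek's criterion is a Hartogs-type argument. The hypothesis makes `1 + l (y - z) a` invertible
for all `l` when `z ∉ σ(y)`, in particular on a circle `|z| = r` enclosing `σ(y)`, and for all
`|z| ≤ r` when `l` is small. The Cauchy integral of `z⁻¹ (1 + l (y - z) a)⁻¹` over `|z| = r` is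
then an entire function of `l` which inverts `1 + l y a` for small `l`, hence, by the identity
theorem, for `l = 1`.
-/

open Metric Set Filter Topology Complex Pointwise

section Analytic

variable {R : Type*} [NormedRing R]

theorem ContinuousAt.ringInverse [HasSummableGeomSeries R] {X : Type*} [TopologicalSpace X]
    {f : X → R} {x : X} (hf : ContinuousAt f x) (hx : IsUnit (f x)) :
    ContinuousAt (fun t => Ring.inverse (f t)) x := by
  obtain ⟨u, hu⟩ := hx
  exact ContinuousAt.comp (g := Ring.inverse) (hu ▸ NormedRing.inverse_continuousAt u) hf

theorem HasDerivAt.ringInverse [HasSummableGeomSeries R] {𝕜 : Type*} [NontriviallyNormedField 𝕜]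
    [NormedAlgebra 𝕜 R] {f : 𝕜 → R} {f' : R} {x : 𝕜} (hf : HasDerivAt f f' x)
    (hx : IsUnit (f x)) :
    HasDerivAt (fun t => Ring.inverse (f t))
      (-(Ring.inverse (f x) * f' * Ring.inverse (f x))) x := by
  obtain ⟨u, hu⟩ := hx
  have hinv : HasFDerivAt Ring.inverse _ (f x) := hu ▸ hasFDerivAt_ringInverse (𝕜 := 𝕜) u
  have h := hinv.comp_hasDerivAt x hf
  rw [← hu, Ring.inverse_unit]
  simp only [neg_apply, ContinuousLinearMap.mulLeftRight_apply] at h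
  exact h

theorem differentiable_circleIntegral_of_hasDerivAt {E : Type*} [NormedAddCommGroup E]
    [NormedSpace ℂ E] {F F' : ℂ → ℂ → E} {c : ℂ} {r : ℝ}
    (hF : ∀ l, ContinuousOn (F l) (sphere c |r|))
    (hF' : ContinuousOn (fun p : ℂ × ℂ => F' p.1 p.2) (univ ×ˢ sphere c |r|))
    (hderiv : ∀ l, ∀ z ∈ sphere c |r|, HasDerivAt (fun l => F l z) (F' l z) l) :
    Differentiable ℂ fun l => ∮ z in C(c, r), F l z := by
  intro l₀
  obtain ⟨C, hC⟩ := ((isCompact_closedBall l₀ 1).prod (isCompact_sphere c |r|))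
    |>.exists_bound_of_continuousOn (hF'.mono (prod_mono (subset_univ _) le_rfl))
  have hcont : ∀ l, Continuous fun θ => deriv (circleMap c r) θ • F l (circleMap c r θ) :=
    fun l => by
      simp only [deriv_circleMap]
      exact (by fun_prop : Continuous fun θ => circleMap 0 r θ * I).smul
        ((hF l).comp_continuous (continuous_circleMap c r) (circleMap_mem_sphere' c r))
  have hcont' : Continuous fun θ => deriv (circleMap c r) θ • F' l₀ (circleMap c r θ) := by
    simp only [deriv_circleMap]
    exact (by fun_prop : Continuous fun θ => circleMap 0 r θ * I).smul
      (hF'.comp_continuous (f := fun θ => (l₀, circleMap c r θ)) (by fun_prop)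
        fun θ => ⟨mem_univ l₀, circleMap_mem_sphere' c r θ⟩)
  refine (intervalIntegral.hasDerivAt_integral_of_dominated_loc_of_deriv_le
    (F := fun l θ => deriv (circleMap c r) θ • F l (circleMap c r θ))
    (F' := fun l θ => deriv (circleMap c r) θ • F' l (circleMap c r θ)) (bound := fun _ => |r| * C)
    (ball_mem_nhds l₀ one_pos) (Eventually.of_forall fun l => (hcont l).aestronglyMeasurable)
    ((hcont l₀).intervalIntegrable _ _) hcont'.aestronglyMeasurable ?_ intervalIntegrable_const
    ?_).2.differentiableAt
  · refine MeasureTheory.ae_of_all _ fun θ _ l hl => ?_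
    rw [norm_smul, deriv_circleMap, norm_mul, norm_circleMap_zero, Complex.norm_I, mul_one]
    exact mul_le_mul_of_nonneg_left
      (hC (l, circleMap c r θ) ⟨ball_subset_closedBall hl, circleMap_mem_sphere' c r θ⟩)
      (abs_nonneg r)
  · exact MeasureTheory.ae_of_all _ fun θ _ l _ =>
      (hderiv l _ (circleMap_mem_sphere' c r θ)).const_smul _

theorem differentiable_circleIntegral_sub_inv_smul_inverse [NormedAlgebra ℂ R] [CompleteSpace R]
    {c : ℂ → R} (hc : Continuous c) {z₀ w : ℂ} {r : ℝ} (hw : w ∉ sphere z₀ |r|)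
    (hunit : ∀ l : ℂ, ∀ z ∈ sphere z₀ |r|, IsUnit (l • c z + 1)) :
    Differentiable ℂ fun l : ℂ => ∮ z in C(z₀, r), (z - w)⁻¹ • Ring.inverse (l • c z + 1) := by
  have hlin : ∀ l z, HasDerivAt (fun l : ℂ => l • c z + 1) (c z) l := fun l z =>
    (((hasDerivAt_id l).smul_const (c z)).add_const 1).congr_deriv (one_smul ℂ (c z))
  have hq : ∀ l, ∀ z ∈ sphere z₀ |r|,
      ContinuousAt (fun p : ℂ × ℂ => Ring.inverse (p.1 • c p.2 + 1)) (l, z) :=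
    fun l z hz => (by fun_prop : Continuous fun p : ℂ × ℂ => p.1 • c p.2 + 1).continuousAt
      |>.ringInverse (hunit l z hz)
  have hzw : ∀ z ∈ sphere z₀ |r|, z - w ≠ 0 := fun z hz =>
    sub_ne_zero.mpr (ne_of_mem_of_not_mem hz hw)
  refine differentiable_circleIntegral_of_hasDerivAt
    (F' := fun l z => (z - w)⁻¹ • -(Ring.inverse (l • c z + 1) * c z * Ring.inverse (l • c z + 1)))
    (fun l z hz => ?_) (fun p hp => ?_) (fun l z hz => ?_)
  · exact (((continuous_id.sub continuous_const).continuousAt.inv₀ (hzw z hz)).smul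
      ((hq l z hz).comp (continuous_const.prodMk continuous_id).continuousAt)).continuousWithinAt
  · have hq' := hq p.1 p.2 hp.2
    exact (((continuous_snd.sub continuous_const).continuousAt.inv₀ (hzw p.2 hp.2)).smul
      ((hq'.mul (by fun_prop : Continuous fun p : ℂ × ℂ => c p.2).continuousAt).mul
        hq').neg).continuousWithinAt
  · exact ((hlin l z).ringInverse (hunit l z hz)).const_smul (z - w)⁻¹

theorem Differentiable.isUnit_of_eventually_mul_eq_one [NormedAlgebra ℂ R] [CompleteSpace R]
    {g Φ : ℂ → R} (hg : Differentiable ℂ g) (hΦ : Differentiable ℂ Φ) {z₀ : ℂ}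
    (h : ∀ᶠ l in 𝓝 z₀, Φ l * g l = 1 ∧ g l * Φ l = 1) (l : ℂ) : IsUnit (g l) := by
  have hleft : (fun l => Φ l * g l) = fun _ => 1 :=
    ((hΦ.mul hg).differentiableOn.analyticOnNhd isOpen_univ).eq_of_eventuallyEq
      analyticOnNhd_const (h.mono fun _ h => h.1)
  have hright : (fun l => g l * Φ l) = fun _ => 1 :=
    ((hg.mul hΦ).differentiableOn.analyticOnNhd isOpen_univ).eq_of_eventuallyEq
      analyticOnNhd_const (h.mono fun _ h => h.2)
  exact ⟨⟨g l, Φ l, congrFun hright l, congrFun hleft l⟩, rfl⟩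

theorem isUnit_mul_add_one_of_forall_isUnit [NormedAlgebra ℂ R] [CompleteSpace R] {a : R}
    (h : ∀ w : R, IsUnit w → IsUnit (w * a + 1)) (y : R) : IsUnit (y * a + 1) := by
  set c : ℂ → R := fun z => (y - z • 1) * a
  set g : ℂ → ℂ → R := fun l z => l • c z + 1
  have hg : Continuous fun p : ℂ × ℂ => g p.1 p.2 := by fun_prop
  obtain ⟨r, hr, hσ⟩ := (spectrum.isCompact (𝕜 := ℂ) y).isBounded.subset_ball_lt 0 0
  have far : ∀ l, ∀ z ∈ sphere (0 : ℂ) r, IsUnit (g l z) := by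
    intro l z hz
    rcases eq_or_ne l 0 with rfl | hl
    · simp [g]
    have hz' : z ∉ spectrum ℂ y := fun hmem => (mem_ball.mp (hσ hmem)).ne (mem_sphere.mp hz)
    have hyz : IsUnit (y - z • 1) := by
      simpa [Algebra.algebraMap_eq_smul_one] using (spectrum.notMem_iff.mp hz').neg
    simpa [g, c, Algebra.smul_def, mul_assoc] using
      h _ ((hl.isUnit.map (algebraMap ℂ R)).mul hyz)
  have near : ∀ᶠ l in 𝓝 0, ∀ z ∈ closedBall (0 : ℂ) r, IsUnit (g l z) :=
    (isCompact_closedBall 0 r).eventually_forall_of_forall_eventually fun z _ =>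
      hg.continuousAt.eventually (Units.isOpen.mem_nhds (by simp [g]))
  set Φ : ℂ → R := fun l =>
    (2 * Real.pi * I : ℂ)⁻¹ • ∮ z in C(0, r), (z - 0)⁻¹ • Ring.inverse (g l z)
  have hΦ : Differentiable ℂ Φ :=
    (differentiable_circleIntegral_sub_inv_smul_inverse (by fun_prop)
      (by simpa [abs_of_pos hr] using hr.ne) (by rwa [abs_of_pos hr])).fun_const_smul _
  have hΦ_inv : ∀ᶠ l in 𝓝 0, Φ l * g l 0 = 1 ∧ g l 0 * Φ l = 1 := by
    filter_upwards [near] with l hl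
    have hunit : IsUnit (g l 0) := hl 0 (mem_closedBall_self hr.le)
    have hdiff : DifferentiableOn ℂ (fun z => Ring.inverse (g l z)) (closedBall 0 r) :=
      fun z hz => ((differentiableAt_inverse (hl z hz)).comp z
        (by fun_prop : DifferentiableAt ℂ (g l) z)).differentiableWithinAt
    have hcauchy : Φ l = Ring.inverse (g l 0) :=
      (hdiff.mono closure_ball_subset_closedBall).diffContOnCl
        |>.two_pi_i_inv_smul_circleIntegral_sub_inv_smul (mem_ball_self hr)
    rw [hcauchy]
    exact ⟨Ring.inverse_mul_cancel _ hunit, Ring.mul_inverse_cancel _ hunit⟩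
  have hg0 : Differentiable ℂ fun l => g l 0 := by fun_prop
  simpa [g, c] using hg0.isUnit_of_eventually_mul_eq_one hΦ hΦ_inv 1

end Analytic

section Semisimple

variable {R : Type*} [NormedRing R] [NormedAlgebra ℂ R] [CompleteSpace R]

theorem mem_jacobson_bot_of_forall_isUnit_add {a : R} (h : ∀ v : R, IsUnit v → IsUnit (a + v)) :
    a ∈ Ideal.jacobson (⊥ : Ideal R) := by
  have hleft : ∀ w : R, IsUnit w → IsUnit (w * a + 1) := by
    rintro _ ⟨u, rfl⟩
    have := u.isUnit.mul (h _ u⁻¹.isUnit)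
    rwa [mul_add, Units.mul_inv] at this
  refine Ideal.mem_jacobson_iff.mpr fun y => ?_
  obtain ⟨u, hu⟩ := isUnit_mul_add_one_of_forall_isUnit hleft y
  refine ⟨↑u⁻¹, ?_⟩
  rw [Submodule.mem_bot, sub_eq_zero, mul_assoc, ← mul_add_one, ← hu, Units.inv_mul]

theorem eq_of_forall_spectrum_add_eq (hR : Ideal.jacobson (⊥ : Ideal R) = ⊥) {p q : R}
    (h : ∀ z : R, spectrum ℂ (p + z) = spectrum ℂ (q + z)) : p = q := by
  suffices p - q ∈ Ideal.jacobson (⊥ : Ideal R) by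
    rwa [hR, Ideal.mem_bot, sub_eq_zero] at this
  refine mem_jacobson_bot_of_forall_isUnit_add fun v hv => ?_
  have hspec := h (v - q)
  rw [add_sub_cancel] at hspec
  rwa [← spectrum.zero_notMem_iff ℂ, sub_add_eq_add_sub, add_sub_assoc, hspec,
    spectrum.zero_notMem_iff]

end Semisimple

def IsSpectrallyAdditive {A B : Type*} [Ring A] [Algebra ℂ A] [Ring B] [Algebra ℂ B]
    (T : A → B) : Prop :=
  ∀ x y : A, spectrum ℂ (x + y) = spectrum ℂ (T x + T y)

namespace IsSpectrallyAdditive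

variable {A B : Type*} {T : A → B}

section Algebraic

variable [Ring A] [Algebra ℂ A] [Ring B] [Algebra ℂ B]

theorem spectrum_apply (hT : IsSpectrallyAdditive T) (x : A) :
    spectrum ℂ (T x) = spectrum ℂ x := by
  let two : ℂˣ := Units.mk0 2 two_ne_zero
  have h := hT x x
  rw [← two_smul ℂ x, ← two_smul ℂ (T x)] at h
  exact MulAction.injective two <| (spectrum.unit_smul_eq_smul (T x) two).symm.trans <|
    h.symm.trans <| spectrum.unit_smul_eq_smul x two

theorem isUnit_apply_iff (hT : IsSpectrallyAdditive T) {x : A} : IsUnit (T x) ↔ IsUnit x := by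
  rw [← spectrum.zero_notMem_iff ℂ, ← spectrum.zero_notMem_iff ℂ, hT.spectrum_apply]

theorem image_setOf_isUnit (hT : IsSpectrallyAdditive T) (hsurj : Function.Surjective T) :
    T '' {x : A | IsUnit x} = {y : B | IsUnit y} := by
  have hpre : {x : A | IsUnit x} = T ⁻¹' {y : B | IsUnit y} :=
    Set.ext fun _ => hT.isUnit_apply_iff.symm
  rw [hpre, Set.image_preimage_eq _ hsurj]

end Algebraic

variable [NormedRing A] [NormedAlgebra ℂ A] [CompleteSpace A] [Ring B] [Algebra ℂ B]
  (hA : Ideal.jacobson (⊥ : Ideal A) = ⊥) (hT : IsSpectrallyAdditive T)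
include hA hT

theorem eq_of_forall_spectrum_add_eq_apply_add {w v : A}
    (h : ∀ z : A, spectrum ℂ (v + z) = spectrum ℂ (T w + T z)) : w = v :=
  eq_of_forall_spectrum_add_eq hA fun z => (hT w z).trans (h z).symm

theorem injective : Function.Injective T := fun _ y hxy =>
  hT.eq_of_forall_spectrum_add_eq_apply_add hA fun z => hxy ▸ hT y z

variable (hsurj : Function.Surjective T)
include hsurj

theorem map_zero : T 0 = 0 := by
  obtain ⟨w, hw⟩ := hsurj 0
  have hw0 : w = 0 := hT.eq_of_forall_spectrum_add_eq_apply_add hA fun z => by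
    rw [hw, zero_add, zero_add, hT.spectrum_apply]
  rwa [hw0] at hw

theorem apply_smul_one_add (lam : ℂ) (x : A) : T (lam • (1 : A) + x) = lam • (1 : B) + T x := by
  obtain ⟨w, hw⟩ := hsurj (lam • (1 : B) + T x)
  have hwx : w = lam • (1 : A) + x := hT.eq_of_forall_spectrum_add_eq_apply_add hA fun z => by
    rw [hw, add_assoc, add_assoc, ← Algebra.algebraMap_eq_smul_one,
      ← Algebra.algebraMap_eq_smul_one, ← spectrum.singleton_add_eq, ← spectrum.singleton_add_eq,
      hT x z]
  rw [← hwx, hw]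

theorem map_one : T 1 = 1 := by
  simpa [hT.map_zero hA hsurj] using hT.apply_smul_one_add hA hsurj 1 0

end IsSpectrallyAdditive

theorem spectrally_additive_basic_properties_general
    {A B : Type*} [NormedRing A] [NormedAlgebra ℂ A] [CompleteSpace A]
    [NormedRing B] [NormedAlgebra ℂ B]
    (hA : Ideal.jacobson (⊥ : Ideal A) = ⊥)
    (T : A → B)
    (hsurj : Function.Surjective T)
    (hsa : ∀ x y : A, spectrum ℂ (x + y) = spectrum ℂ (T x + T y)) :
    (∀ x : A, spectrum ℂ (T x) = spectrum ℂ x) ∧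
      (T '' {x : A | IsUnit x} = {y : B | IsUnit y}) ∧
      Function.Injective T ∧
      (∀ (lam : ℂ) (x : A), T (lam • (1 : A) + x) = lam • (1 : B) + T x) ∧
      T 0 = 0 ∧ T 1 = 1 := by
  have hT : IsSpectrallyAdditive T := hsa
  exact ⟨hT.spectrum_apply, hT.image_setOf_isUnit hsurj, hT.injective hA,
    hT.apply_smul_one_add hA hsurj, hT.map_zero hA hsurj, hT.map_one hA hsurj⟩

/-- Basic properties of a surjective spectrally additive map from a semisimple complex
unital Banach algebra: it preserves spectra, maps invertibles onto invertibles, is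
injective, and satisfies `T(λ·1 + x) = λ·1 + Tx`; in particular `T 0 = 0` and `T 1 = 1`. -/
theorem spectrally_additive_basic_properties
    {A B : Type*} [NormedRing A] [NormedAlgebra ℂ A] [CompleteSpace A]
    [NormedRing B] [NormedAlgebra ℂ B] [CompleteSpace B]
    (hA : Ideal.jacobson (⊥ : Ideal A) = ⊥)
    (T : A → B)
    (hsurj : Function.Surjective T)
    (hsa : ∀ x y : A, spectrum ℂ (x + y) = spectrum ℂ (T x + T y)) :
    (∀ x : A, spectrum ℂ (T x) = spectrum ℂ x) ∧
      (T '' {x : A | IsUnit x} = {y : B | IsUnit y}) ∧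
      Function.Injective T ∧
      (∀ (lam : ℂ) (x : A), T (lam • (1 : A) + x) = lam • (1 : B) + T x) ∧
      T 0 = 0 ∧ T 1 = 1 :=
  spectrally_additive_basic_properties_general hA T hsurj hsa
end

section
/- Let A be a unital C*-algebra, let B be a complex unital Banach algebra, and let S : A → B be a complex-linear map such that σ(Sa) = σ(a) for every self-adjoint element a ∈ A. Then S is injective. -/
/-!
Write `a = x + I • y` with `x, y` self-adjoint. If `S a = 0` then `S y = I • S x`, so every point
`z` of the real set `σ x` has `I * z` in the real set `σ y`; hence `σ x ⊆ {0}`, and a self-adjoint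
element with spectrum `{0}` vanishes. Applying this to `I • a`, whose real part is `-y`, gives `y = 0`.
-/

open Complex ComplexStarModule

theorem realPart_eq_zero_of_map_eq_zero_of_spectrum_eq {A B : Type*} [CStarAlgebra A] [Ring B]
    [Algebra ℂ B] (S : A →ₗ[ℂ] B)
    (hspec : ∀ a : A, IsSelfAdjoint a → spectrum ℂ (S a) = spectrum ℂ a) {a : A} (ha : S a = 0) :
    (ℜ a : A) = 0 := by
  have hx : IsSelfAdjoint (ℜ a : A) := (ℜ a).2
  have hy : IsSelfAdjoint (ℑ a : A) := (ℑ a).2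
  have hsum : S (ℜ a) + I • S (ℑ a) = 0 := by
    rw [← map_smul, ← map_add, realPart_add_I_smul_imaginaryPart, ha]
  have hS : S (ℑ a) = I • S (ℜ a) := by
    have h := congrArg (I • ·) hsum
    simp only [smul_add, smul_smul, I_mul_I, neg_one_smul, smul_zero] at h
    exact (add_neg_eq_zero.mp h).symm
  refine CFC.eq_zero_of_spectrum_subset_zero (R := ℂ) _ (fun z hz ↦ ?_)
  have hIz : I * z ∈ spectrum ℂ (ℑ a : A) := by
    rw [← hspec _ hx] at hz
    rw [← hspec _ hy, hS]
    exact spectrum.smul_mem_smul_iff (r := Units.mk0 I I_ne_zero) |>.mpr hz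
  have hre : z.re = 0 := by simpa using hy.im_eq_zero_of_mem_spectrum hIz
  exact Complex.ext hre (hx.im_eq_zero_of_mem_spectrum hz)

theorem injective_of_linear_spectrum_preserving_on_selfAdjoints_general
    {A : Type*} [NormedRing A] [StarRing A] [CStarRing A] [NormedAlgebra ℂ A]
    [CompleteSpace A] [StarModule ℂ A]
    {B : Type*} [NormedRing B] [NormedAlgebra ℂ B]
    (S : A →ₗ[ℂ] B)
    (hspec : ∀ a : A, IsSelfAdjoint a → spectrum ℂ (S a) = spectrum ℂ a) :
    Function.Injective S := by
  let _ : CStarAlgebra A := ⟨⟩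
  refine (injective_iff_map_eq_zero S).mpr fun a ha ↦ ?_
  have hre : (ℜ a : A) = 0 := realPart_eq_zero_of_map_eq_zero_of_spectrum_eq S hspec ha
  have him : (ℑ a : A) = 0 := by
    have hIa : S (I • a) = 0 := by rw [map_smul, ha, smul_zero]
    simpa [realPart_I_smul] using realPart_eq_zero_of_map_eq_zero_of_spectrum_eq S hspec hIa
  rw [← realPart_add_I_smul_imaginaryPart a, hre, him, smul_zero, add_zero]

/-- A complex-linear map from a unital C*-algebra into a complex unital Banach algebra
which preserves the spectrum of every self-adjoint element is injective. -/
theorem injective_of_linear_spectrum_preserving_on_selfAdjoints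
    {A : Type*} [NormedRing A] [StarRing A] [CStarRing A] [NormedAlgebra ℂ A]
    [CompleteSpace A] [StarModule ℂ A]
    {B : Type*} [NormedRing B] [NormedAlgebra ℂ B] [CompleteSpace B]
    (S : A →ₗ[ℂ] B)
    (hspec : ∀ a : A, IsSelfAdjoint a → spectrum ℂ (S a) = spectrum ℂ a) :
    Function.Injective S :=
  injective_of_linear_spectrum_preserving_on_selfAdjoints_general S hspec
end
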